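/- arXiv:1906.07723 — 2 statements merged into one kernel-verified Lean document; each statement's English description precedes it below -/
import Mathlib

section
/- Let x_1,...,x_r and y_2,...,y_r be indeterminates and c a constant. Then det_{1≤i,j≤r} ( ∏_{k=j+1}^{r} (x_i - y_k - c)(x_i + y_k) ) = ∏_{1≤i<j≤r} (x_j - x_i)(c - x_i - x_j). -/
open Finset

open Polynomial in
lemma rev_pair_prod {R : Type*} [CommMonoid R] {r : ℕ} (f : Fin r → Fin r → R) :
    (∏ i : Fin r, ∏ j ∈ Ioi i, f (Fin.rev j) (Fin.rev i)) =
      ∏ i : Fin r, ∏ j ∈ Ioi i, f i j := by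
  rw [Finset.prod_sigma', Finset.prod_sigma']
  refine Finset.prod_nbij' (fun p => ⟨Fin.rev p.2, Fin.rev p.1⟩)
    (fun p => ⟨Fin.rev p.2, Fin.rev p.1⟩) ?_ ?_ ?_ ?_ ?_
  · rintro ⟨i, j⟩ h
    simp only [Finset.mem_sigma, Finset.mem_univ, Finset.mem_Ioi, true_and] at h ⊢
    exact Fin.rev_lt_rev.mpr h
  · rintro ⟨i, j⟩ h
    simp only [Finset.mem_sigma, Finset.mem_univ, Finset.mem_Ioi, true_and] at h ⊢
    exact Fin.rev_lt_rev.mpr h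
  · rintro ⟨i, j⟩ _; simp
  · rintro ⟨i, j⟩ _; simp
  · rintro ⟨i, j⟩ _; simp

open Polynomial in
/-- Krattenthaler's determinant lemma: for indeterminates x₁,…,x_r, y₂,…,y_r and a constant c,
det((∏_{k=j+1}^r (x_i - y_k - c)(x_i + y_k))) = ∏_{i<j} (x_j - x_i)(c - x_i - x_j).
(Indices are 0-based here; `y` is only evaluated at indices ≥ 1.) -/
theorem krattenthaler_det {R : Type*} [CommRing R] (r : ℕ) (x y : Fin r → R) (c : R) :
    (Matrix.of fun i j : Fin r =>
        ∏ k ∈ Finset.Ioi j, (x i - y k - c) * (x i + y k)).det =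
      ∏ i : Fin r, ∏ j ∈ Finset.Ioi i, (x j - x i) * (c - x i - x j) := by
  rcases subsingleton_or_nontrivial R with h | h
  · exact Subsingleton.elim _ _
  set u : Fin r → R := fun i => x i ^ 2 - c * x i with hu
  set v : Fin r → R := fun k => y k ^ 2 + c * y k with hv
  set p : Fin r → R[X] := fun j => ∏ k ∈ Ioi (Fin.rev j), (X - C (v k)) with hp
  have hmonic : ∀ j, (p j).Monic := fun j =>
    monic_prod_of_monic _ _ fun k _ => monic_X_sub_C _
  have hdeg : ∀ j : Fin r, (p j).natDegree = j := by
    intro j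
    rw [hp, natDegree_prod_of_monic _ _ fun k _ => monic_X_sub_C _]
    simp only [natDegree_X_sub_C]
    rw [Finset.sum_const, smul_eq_mul, mul_one, Fin.card_Ioi, Fin.val_rev]
    omega
  have hentry : ∀ i j : Fin r,
      (∏ k ∈ Ioi j, (x i - y k - c) * (x i + y k)) =
        Polynomial.eval (u i) (∏ k ∈ Ioi j, (X - C (v k))) := by
    intro i j
    rw [eval_prod]
    refine Finset.prod_congr rfl fun k _ => ?_
    simp [hu, hv]; ring
  rw [← Matrix.det_submatrix_equiv_self (Fin.revPerm)]
  have : ((Matrix.of fun i j : Fin r =>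
      ∏ k ∈ Finset.Ioi j, (x i - y k - c) * (x i + y k)).submatrix Fin.revPerm Fin.revPerm)
      = Matrix.of fun i j => (p j).eval (u (Fin.rev i)) := by
    ext i j
    simp only [Matrix.submatrix_apply, Matrix.of_apply, Fin.revPerm_apply, hp]
    rw [hentry]
  rw [this, ← Matrix.det_eval_matrixOfPolynomials_eq_det_vandermonde _ p hdeg hmonic,
    Matrix.det_vandermonde]
  rw [← rev_pair_prod (fun i j => (x j - x i) * (c - x i - x j))]
  refine Finset.prod_congr rfl fun i _ => Finset.prod_congr rfl fun j _ => ?_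
  simp only [hu]
  ring
end

section
/- In any vertically and off-diagonally symmetric ASM of odd order n ≥ 5, the first 1 of the second row cannot lie in column 1 or column 2; i.e., A_VOS(n,1) = A_VOS(n,2) = 0. -/
open Finset

/-- An alternating sign matrix: entries in `{-1,0,1}`, all row and column sums equal `1`,
and all partial (prefix) row and column sums lie in `{0,1}` — the latter is the standard
equivalent of the condition that nonzero entries alternate in sign along rows and columns. -/
def IsASM {n : ℕ} (A : Matrix (Fin n) (Fin n) ℤ) : Prop :=
  (∀ i j, A i j = -1 ∨ A i j = 0 ∨ A i j = 1) ∧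
  (∀ i : Fin n, ∑ j, A i j = 1) ∧
  (∀ j : Fin n, ∑ i, A i j = 1) ∧
  (∀ i k : Fin n, (∑ j ∈ Finset.univ.filter (fun j : Fin n => j ≤ k), A i j) = 0 ∨
      (∑ j ∈ Finset.univ.filter (fun j : Fin n => j ≤ k), A i j) = 1) ∧
  (∀ j k : Fin n, (∑ i ∈ Finset.univ.filter (fun i : Fin n => i ≤ k), A i j) = 0 ∨
      (∑ i ∈ Finset.univ.filter (fun i : Fin n => i ≤ k), A i j) = 1)

/-- Entry of a matrix addressed by natural-number (0-based) indices, `0` out of range. -/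
def Mentry {m n : ℕ} (A : Matrix (Fin m) (Fin n) ℤ) (i j : ℕ) : ℤ :=
  if h : i < m ∧ j < n then A ⟨i, h.1⟩ ⟨j, h.2⟩ else 0

/-- Vertical symmetry: invariance under reflection in the vertical axis. -/
def VSym {m : ℕ} (A : Matrix (Fin m) (Fin m) ℤ) : Prop :=
  ∀ i j : Fin m, A i j = A i ⟨m - 1 - j.1, by have := j.isLt; omega⟩

/-- A vertically and off-diagonally symmetric ASM (VOSASM) of order 2m+1: vertically
symmetric, symmetric about the main diagonal, with all diagonal entries 0 except the
central one. -/
def IsVOSASM (m : ℕ) (A : Matrix (Fin (2 * m + 1)) (Fin (2 * m + 1)) ℤ) : Prop :=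
  IsASM A ∧ VSym A ∧ (∀ i j, A i j = A j i) ∧ ∀ i : Fin (2 * m + 1), i.1 ≠ m → A i i = 0

/-- For odd order n = 2m+1 ≥ 5, no VOSASM has the leftmost 1 of its second row in
column 1 or column 2: A_VOS(n,1) = A_VOS(n,2) = 0. -/
theorem vosasm_first_two_columns (m : ℕ) (hm : 2 ≤ m) (i : ℕ) (hi : i = 1 ∨ i = 2) :
    Nat.card {A : Matrix (Fin (2 * m + 1)) (Fin (2 * m + 1)) ℤ //
      IsVOSASM m A ∧ Mentry A 1 (i - 1) = 1 ∧ ∀ j < i - 1, Mentry A 1 j ≠ 1} = 0 := by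
  rw [Nat.card_eq_zero]
  left
  constructor
  rintro ⟨A, ⟨⟨hent, hrow, hcol, hprow, hpcol⟩, hvs, hsym, hdiag⟩, h1, h2⟩
  have h1lt : (1:ℕ) < 2 * m + 1 := by omega
  have h0lt : (0:ℕ) < 2 * m + 1 := by omega
  rcases hi with hi | hi
  · -- i = 1 : A 1 0 = 1 leads to contradiction
    subst hi
    have hA10 : A ⟨1, h1lt⟩ ⟨0, h0lt⟩ = 1 := by
      simpa [Mentry, h1lt, h0lt] using h1
    have hA01 : A ⟨0, h0lt⟩ ⟨1, h1lt⟩ = 1 := by rw [hsym]; exact hA10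
    have hvlt : 2 * m - 1 < 2 * m + 1 := by omega
    have hA0r : A ⟨0, h0lt⟩ ⟨2 * m - 1, hvlt⟩ = 1 := by
      have h := (hvs ⟨0, h0lt⟩ ⟨1, h1lt⟩).symm.trans hA01
      convert h using 2
      ext; simp only [Fin.val_mk]; omega
    -- row 0 has no -1
    have hnn : ∀ j, 0 ≤ A ⟨0, h0lt⟩ j := by
      intro j
      have hfil : (Finset.univ.filter (fun i : Fin (2*m+1) => i ≤ (⟨0, h0lt⟩ : Fin (2*m+1))))
          = {⟨0, h0lt⟩} := by
        ext x
        simp only [Finset.mem_filter, Finset.mem_univ, true_and, Finset.mem_singleton, Fin.le_def, Fin.ext_iff]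
        constructor <;> intro h <;> omega
      have := hpcol j ⟨0, h0lt⟩
      rw [hfil, Finset.sum_singleton] at this
      rcases this with h | h <;> omega
    have hsum : ∑ j, A ⟨0, h0lt⟩ j = 1 := hrow _
    have hne : (⟨1, h1lt⟩ : Fin (2*m+1)) ≠ ⟨2 * m - 1, hvlt⟩ := by
      simp [Fin.ext_iff]; omega
    have hge : (2:ℤ) ≤ ∑ j, A ⟨0, h0lt⟩ j := by
      have hsub : ({⟨1, h1lt⟩, ⟨2 * m - 1, hvlt⟩} : Finset (Fin (2*m+1))) ⊆ Finset.univ :=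
        Finset.subset_univ _
      have := Finset.sum_le_sum_of_subset_of_nonneg hsub (fun x _ _ => hnn x)
      rw [Finset.sum_pair hne, hA01, hA0r] at this
      linarith
    omega
  · -- i = 2 : A 1 1 = 1 contradicts diagonal zero
    subst hi
    have hA11 : A ⟨1, h1lt⟩ ⟨1, h1lt⟩ = 1 := by
      simpa [Mentry, h1lt] using h1
    have := hdiag ⟨1, h1lt⟩ (by simp; omega)
    omega
end
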